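/- arXiv:2106.11569 — 2 statements merged into one kernel-verified Lean document; each statement's English description precedes it below -/
import Mathlib

section
/- Let R be a finite commutative chain ring, S a Galois extension of R of degree m with residue field F_{q^m} and natural projection Ψ : S → F_{q^m} extended coefficient-by-coefficient. Let C be an F_{q^m}-linear rank metric code of length n, rank k, and minimum rank distance d, generated by g_1,…,g_k ∈ F_{q^m}^n. For each j choose g'_j ∈ S^n with Ψ(g'_j) = g_j, and let C' be the S-linear code generated by g'_1,…,g'_k. Then C' is a free S-linear rank metric code of length n, rank k, and minimum rank distance d. -/
open IsLocalRing

/-- The rank of a submodule `N`: the smallest number of elements generating `N`. -/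
noncomputable def subrank {R M : Type*} [Semiring R] [AddCommMonoid M] [Module R M]
    (N : Submodule R M) : ℕ :=
  sInf {k | ∃ f : Fin k → M, Submodule.span R (Set.range f) = N}

/-- The rank of a vector `u ∈ S^n` over `R`: the smallest number of generators of the
`R`-submodule of `S` generated by the coordinates of `u` (i.e. of the support of `u`). -/
noncomputable def vecrank (R : Type*) {S : Type*} {n : ℕ} [Semiring R] [AddCommMonoid S]
    [Module R S] (u : Fin n → S) : ℕ :=
  subrank (Submodule.span R (Set.range u))

/-- The minimum rank distance of a linear code `C ⊆ S^n`, ranks being taken over `K`. -/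
noncomputable def minrkdist (K : Type*) {S : Type*} {n : ℕ} [Semiring K] [Ring S]
    [Module K S] (C : Submodule S (Fin n → S)) : ℕ :=
  sInf {d | ∃ u ∈ C, ∃ v ∈ C, u ≠ v ∧ vecrank K (u - v) = d}

/-- The residue field of `S` as an algebra over the residue field of `R`, via the map
induced by `algebraMap R S`. -/
noncomputable instance residueFieldAlgebra {R S : Type*} [CommRing R] [IsLocalRing R]
    [CommRing S] [IsLocalRing S] [Algebra R S] [IsLocalHom (algebraMap R S)] :
    Algebra (ResidueField R) (ResidueField S) :=
  (ResidueField.map (algebraMap R S)).toAlgebra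

/-!
Write `Ψ` for reduction modulo the maximal ideal of `S`. In a local principal ideal ring a
nonzero coefficient vector `a` factors as `s • b` with some `b j` a unit, so every nonzero word
of `C'` is `s • y` with `y ∈ C'` and `Ψ y` a nonzero word of `C`; as the `Ψ g'ⱼ = gⱼ` are
independent, this also makes the `g'ⱼ` independent over `S`. For `s ≠ 0` the `R`-span of the
coordinates of `s • y` needs at least `rk Ψ(y)` generators, and when `s` annihilates the maximal
ideal (such `s ≠ 0` exist since `S` is Artinian) exactly that many: then `s • S` is a vector
space over the residue field of `R`, isomorphic to that of `S`. Hence `C` and `C'` have the same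
minimum rank distance.
-/

section Subrank

lemma subrank_le_of_span_eq {R M : Type*} [Semiring R] [AddCommMonoid M] [Module R M]
    {N : Submodule R M} {k : ℕ} (f : Fin k → M) (h : Submodule.span R (Set.range f) = N) :
    subrank N ≤ k :=
  Nat.sInf_le ⟨f, h⟩

lemma exists_span_eq_of_subrank {R M : Type*} [Semiring R] [AddCommMonoid M] [Module R M]
    {N : Submodule R M} {k : ℕ} (f : Fin k → M) (h : Submodule.span R (Set.range f) = N) :
    ∃ f' : Fin (subrank N) → M, Submodule.span R (Set.range f') = N :=
  Nat.sInf_mem (s := {k | ∃ f : Fin k → M, Submodule.span R (Set.range f) = N}) ⟨k, f, h⟩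

lemma exists_span_eq_of_vecrank (R : Type*) {S : Type*} {n : ℕ} [Semiring R] [AddCommMonoid S]
    [Module R S] (u : Fin n → S) :
    ∃ f : Fin (vecrank R u) → S,
      Submodule.span R (Set.range f) = Submodule.span R (Set.range u) :=
  exists_span_eq_of_subrank u rfl

lemma subrank_map_le {R R₂ M M₂ : Type*} [Semiring R] [Semiring R₂] [AddCommMonoid M]
    [AddCommMonoid M₂] [Module R M] [Module R₂ M₂] {σ : R →+* R₂} [RingHomSurjective σ]
    (φ : M →ₛₗ[σ] M₂) {N : Submodule R M} {k : ℕ} (f : Fin k → M)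
    (h : Submodule.span R (Set.range f) = N) :
    subrank (N.map φ) ≤ subrank N := by
  obtain ⟨f', hf'⟩ := exists_span_eq_of_subrank f h
  exact subrank_le_of_span_eq (φ ∘ f') (by rw [Set.range_comp, ← Submodule.map_span, hf'])

variable {K V : Type*} [DivisionRing K] [AddCommGroup V] [Module K V]

lemma subrank_eq_finrank (N : Submodule K V) [Module.Finite K N] :
    subrank N = Module.finrank K N := by
  let b := Module.finBasis K N
  have hb : Submodule.span K (Set.range (N.subtype ∘ b)) = N := by
    rw [Set.range_comp, Submodule.span_image, b.span_eq, Submodule.map_top,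
      Submodule.range_subtype]
  refine le_antisymm (subrank_le_of_span_eq _ hb) ?_
  obtain ⟨f, hf⟩ := exists_span_eq_of_subrank _ hb
  calc Module.finrank K N = (Set.range f).finrank K := by rw [Set.finrank, hf]
    _ ≤ subrank N := (finrank_range_le_card f).trans_eq (Fintype.card_fin _)

lemma subrank_le_of_le_span {N : Submodule K V} {k : ℕ} (f : Fin k → V)
    (h : N ≤ Submodule.span K (Set.range f)) : subrank N ≤ k := by
  have := Module.Finite.span_of_finite K (Set.finite_range f)
  have := Submodule.finiteDimensional_of_le h
  rw [subrank_eq_finrank]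
  exact (Submodule.finrank_mono h).trans
    ((finrank_range_le_card f).trans_eq (Fintype.card_fin k))

lemma linearIndependent_of_subrank_span_eq {k : ℕ} (g : Fin k → V)
    (h : subrank (Submodule.span K (Set.range g)) = k) : LinearIndependent K g := by
  have := Module.Finite.span_of_finite K (Set.finite_range g)
  rw [linearIndependent_iff_card_le_finrank_span, Fintype.card_fin, Set.finrank,
    ← subrank_eq_finrank, h]

end Subrank

lemma minrkdist_eq_sInf_vecrank (K : Type*) {S : Type*} {n : ℕ} [Semiring K] [Ring S]
    [Module K S] (C : Submodule S (Fin n → S)) :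
    minrkdist K C = sInf {r | ∃ x ∈ C, x ≠ 0 ∧ vecrank K x = r} := by
  unfold minrkdist
  congr 1
  ext r
  constructor
  · rintro ⟨u, hu, v, hv, huv, rfl⟩
    exact ⟨u - v, C.sub_mem hu hv, sub_ne_zero.mpr huv, rfl⟩
  · rintro ⟨x, hx, hx0, rfl⟩
    exact ⟨x, hx, 0, C.zero_mem, hx0, by rw [sub_zero]⟩

lemma Nat.sInf_le_sInf_of_forall_exists_le {A B : Set ℕ} (hB : B.Nonempty)
    (h : ∀ b ∈ B, ∃ a ∈ A, a ≤ b) : sInf A ≤ sInf B := by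
  obtain ⟨a, ha, hab⟩ := h _ (Nat.sInf_mem hB)
  exact (Nat.sInf_le ha).trans hab

lemma Nat.sInf_eq_of_forall_exists_le {A B : Set ℕ} (hAB : ∀ a ∈ A, ∃ b ∈ B, b ≤ a)
    (hBA : ∀ b ∈ B, ∃ a ∈ A, a ≤ b) : sInf A = sInf B := by
  rcases B.eq_empty_or_nonempty with rfl | hB
  · have hA : A = ∅ := Set.eq_empty_of_forall_notMem fun a ha ↦ by
      obtain ⟨b, hb, -⟩ := hAB a ha
      exact hb
    rw [hA]
  · obtain ⟨a, ha, -⟩ := hBA _ hB.some_mem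
    exact le_antisymm (sInf_le_sInf_of_forall_exists_le hB hBA)
      (sInf_le_sInf_of_forall_exists_le ⟨a, ha⟩ hAB)

lemma Submodule.span_range_smul {R S ι : Type*} [CommRing R] [CommRing S] [Algebra R S]
    (s : S) (v : ι → S) :
    span R (Set.range (s • v)) = (span R (Set.range v)).map (LinearMap.mulLeft R s) := by
  rw [map_span, ← Set.range_comp]
  rfl

namespace IsLocalRing

section LocalRing

variable {S : Type*} [CommRing S] [IsLocalRing S] {ι : Type*}

instance : RingHomSurjective (residue S) := ⟨residue_surjective⟩

variable (ι S) in
noncomputable def residuePi : (ι → S) →ₛₗ[residue S] (ι → ResidueField S) where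
  toFun v := residue S ∘ v
  map_add' _ _ := by ext; simp
  map_smul' _ _ := by ext; simp

lemma residuePi_apply (v : ι → S) : residuePi S ι v = residue S ∘ v := rfl

lemma eq_zero_of_smul_eq_zero_of_residue_ne_zero {s : S} {y : ι → S}
    (h : s • y = 0) (hy : residue S ∘ y ≠ 0) : s = 0 := by
  obtain ⟨i, hi⟩ := Function.ne_iff.mp hy
  exact ((residue_ne_zero_iff_isUnit _).mp hi).mul_left_eq_zero.mp (congrFun h i)

lemma exists_eq_smul_and_exists_isUnit [IsPrincipalIdealRing S] [Fintype ι] {a : ι → S}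
    (ha : a ≠ 0) : ∃ (s : S) (b : ι → S), a = s • b ∧ ∃ j, IsUnit (b j) := by
  obtain ⟨s, hs⟩ := (IsPrincipalIdealRing.principal (Ideal.span (Set.range a))).principal
  rw [Ideal.submodule_span_eq] at hs
  have hdvd (j : ι) : s ∣ a j :=
    Ideal.mem_span_singleton.mp (hs ▸ Ideal.subset_span ⟨j, rfl⟩)
  choose b hb using hdvd
  refine ⟨s, b, funext hb, ?_⟩
  by_contra! hnu
  obtain ⟨c, hc⟩ : ∃ c : ι → S, ∑ j, c j * a j = s :=
    Ideal.mem_span_range_iff_exists_fun.mp (hs ▸ Ideal.mem_span_singleton_self s)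
  -- `s = s * ∑ c j * b j` with the sum in the maximal ideal, so `s = 0`
  have hmem : ∑ j, c j * b j ∈ maximalIdeal S :=
    Ideal.sum_mem _ fun j _ ↦ Ideal.mul_mem_left _ _ ((mem_maximalIdeal _).mpr (hnu j))
  have hs0 : s * (1 - ∑ j, c j * b j) = 0 := by
    rw [mul_sub, mul_one, Finset.mul_sum, sub_eq_zero]
    conv_lhs => rw [← hc]
    simp only [hb, mul_left_comm]
  have : s = 0 := (isUnit_one_sub_self_of_mem_nonunits _ hmem).mul_left_eq_zero.mp hs0
  exact ha (funext fun j ↦ by rw [hb, this, zero_mul, Pi.zero_apply])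

variable {k : ℕ} {g' : Fin k → ι → S}

lemma residue_comp_sum_smul_ne_zero
    (hg : LinearIndependent (ResidueField S) (residuePi S ι ∘ g')) {b : Fin k → S} {j : Fin k}
    (hj : IsUnit (b j)) : residue S ∘ ∑ j, b j • g' j ≠ 0 := by
  rw [← residuePi_apply, map_sum]
  simp_rw [map_smulₛₗ]
  intro h
  exact (residue_ne_zero_iff_isUnit _).mpr hj (Fintype.linearIndependent_iff.mp hg _ h j)

variable [IsPrincipalIdealRing S]

lemma linearIndependent_of_linearIndependent_residuePi
    (hg : LinearIndependent (ResidueField S) (residuePi S ι ∘ g')) : LinearIndependent S g' := by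
  rw [Fintype.linearIndependent_iff]
  intro a ha
  by_contra! hne
  obtain ⟨s, b, rfl, j, hj⟩ := exists_eq_smul_and_exists_isUnit (Function.ne_iff.mpr hne)
  simp only [Pi.smul_apply, smul_eq_mul, ← smul_smul, ← Finset.smul_sum] at ha
  obtain rfl :=
    eq_zero_of_smul_eq_zero_of_residue_ne_zero ha (residue_comp_sum_smul_ne_zero hg hj)
  simp at hne

lemma exists_eq_smul_of_mem_span
    (hg : LinearIndependent (ResidueField S) (residuePi S ι ∘ g')) {x : ι → S}
    (hx : x ∈ Submodule.span S (Set.range g')) (hx0 : x ≠ 0) :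
    ∃ (s : S) (y : ι → S), s ≠ 0 ∧ y ∈ Submodule.span S (Set.range g') ∧
      x = s • y ∧ residue S ∘ y ≠ 0 := by
  obtain ⟨a, rfl⟩ := (Submodule.mem_span_range_iff_exists_fun S).mp hx
  have ha : a ≠ 0 := by rintro rfl; simp at hx0
  obtain ⟨s, b, rfl, j, hj⟩ := exists_eq_smul_and_exists_isUnit ha
  have hsum : ∑ j, (s • b) j • g' j = s • ∑ j, b j • g' j := by
    simp only [Pi.smul_apply, smul_eq_mul, ← smul_smul, ← Finset.smul_sum]
  refine ⟨s, _, ?_,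
    Submodule.sum_mem _ fun j _ ↦ Submodule.smul_mem _ _ (Submodule.subset_span ⟨j, rfl⟩),
    hsum, residue_comp_sum_smul_ne_zero hg hj⟩
  rintro rfl
  simp at hx0

end LocalRing

lemma exists_ne_zero_forall_mem_maximalIdeal_mul_eq_zero (S : Type*) [CommRing S] [IsLocalRing S]
    [IsArtinianRing S] : ∃ s : S, s ≠ 0 ∧ ∀ t ∈ maximalIdeal S, s * t = 0 := by
  -- the maximal ideal is the only prime, hence an associated prime: the annihilator of some `s`
  obtain ⟨P, hP⟩ := associatedPrimes.nonempty S S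
  obtain ⟨hprime, s, hPs⟩ := isAssociatedPrime_iff.mp hP
  have hPm : P = maximalIdeal S := eq_maximalIdeal (IsArtinianRing.isMaximal_of_isPrime P)
  refine ⟨s, ?_, fun t ht ↦ ?_⟩
  · rintro rfl
    exact hprime.ne_top (by ext; simp [hPs, Submodule.mem_colon_singleton])
  · rw [← hPm, hPs, Submodule.mem_colon_singleton, Submodule.mem_bot, smul_eq_mul] at ht
    rw [mul_comm, ht]

section ResidueField

variable {R S : Type*} [CommRing R] [IsLocalRing R] [CommRing S] [IsLocalRing S] [Algebra R S]
  [IsLocalHom (algebraMap R S)] {ι : Type*} {n : ℕ}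

-- Spans over `ResidueField R` use Mathlib's action on `ResidueField S`, which agrees with that of
-- `residueFieldAlgebra` only after unfolding; `Ideal.Quotient.mkₐ` reaches it directly.
variable (R S) in
noncomputable def residueSemilinearMap : S →ₛₗ[residue R] ResidueField S where
  toFun := residue S
  map_add' := map_add (residue S)
  map_smul' r s := (map_smul (Ideal.Quotient.mkₐ R (maximalIdeal S)) r s).trans
    (algebraMap_smul (ResidueField R) r (residue S s))

lemma residue_mem_span_iff {t : S} {v : ι → S} :
    residue S t ∈ Submodule.span (ResidueField R) (Set.range (residue S ∘ v)) ↔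
      ∃ u ∈ Submodule.span R (Set.range v), t - u ∈ maximalIdeal S := by
  change _ ∈ Submodule.span _ (Set.range (residueSemilinearMap R S ∘ v)) ↔ _
  rw [Set.range_comp, ← Submodule.map_span, Submodule.mem_map]
  refine exists_congr fun u ↦ and_congr_right fun _ ↦ ?_
  rw [← residue_eq_zero_iff, map_sub, sub_eq_zero, eq_comm]
  rfl

lemma mul_mem_span_smul_of_residue_mem_span {s : S} (hs : ∀ t ∈ maximalIdeal S, s * t = 0)
    {t : S} {v : ι → S}
    (h : residue S t ∈ Submodule.span (ResidueField R) (Set.range (residue S ∘ v))) :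
    s * t ∈ Submodule.span R (Set.range (s • v)) := by
  obtain ⟨u, hu, htu⟩ := residue_mem_span_iff.mp h
  rw [Submodule.span_range_smul]
  refine ⟨u, hu, ?_⟩
  rw [LinearMap.mulLeft_apply, eq_comm, ← sub_eq_zero, ← mul_sub, hs _ htu]

lemma vecrank_residue_comp_le_vecrank_smul {s : S} (hs : s ≠ 0) (y : Fin n → S) :
    vecrank (ResidueField R) (residue S ∘ y) ≤ vecrank R (s • y) := by
  obtain ⟨f, hf⟩ := exists_span_eq_of_vecrank R (s • y)
  have hfs (l) : ∃ v, s * v = f l := by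
    have hl : f l ∈ Submodule.span R (Set.range (s • y)) := by
      rw [← hf]
      exact Submodule.subset_span ⟨l, rfl⟩
    rw [Submodule.span_range_smul] at hl
    obtain ⟨v, -, hv⟩ := hl
    exact ⟨v, hv⟩
  choose v hv using hfs
  rw [show f = s • v from (funext hv).symm] at hf
  refine subrank_le_of_le_span (residue S ∘ v) (Submodule.span_le.mpr ?_)
  rintro _ ⟨i, rfl⟩
  have hi : s * y i ∈ Submodule.span R (Set.range (s • v)) := by
    rw [hf]
    exact Submodule.subset_span ⟨i, rfl⟩
  rw [Submodule.span_range_smul] at hi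
  obtain ⟨u, hu, hsu⟩ := hi
  refine residue_mem_span_iff.mpr ⟨u, hu, ?_⟩
  -- `s * (y i - u) = 0` with `s ≠ 0`, so `y i - u` is not a unit
  by_contra hunit
  refine hs ((notMem_maximalIdeal.mp hunit).mul_left_eq_zero.mp ?_)
  rw [mul_sub, ← hsu, LinearMap.mulLeft_apply, sub_self]

lemma vecrank_smul_le_vecrank_residue_comp {s : S} (hs : ∀ t ∈ maximalIdeal S, s * t = 0)
    (y : Fin n → S) : vecrank R (s • y) ≤ vecrank (ResidueField R) (residue S ∘ y) := by
  obtain ⟨f, hf⟩ := exists_span_eq_of_vecrank (ResidueField R) (residue S ∘ y)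
  choose f' hf' using fun l ↦ residue_surjective (f l)
  rw [show f = residue S ∘ f' from (funext hf').symm] at hf
  refine subrank_le_of_span_eq (s • f') (le_antisymm ?_ ?_) <;>
    rw [Submodule.span_le] <;> rintro _ ⟨i, rfl⟩ <;>
    refine mul_mem_span_smul_of_residue_mem_span hs ?_
  · rw [← hf]
    exact Submodule.subset_span ⟨i, rfl⟩
  · rw [hf]
    exact Submodule.subset_span ⟨i, rfl⟩

theorem minrkdist_span_eq_minrkdist_map [IsArtinianRing S] [IsPrincipalIdealRing S] {k : ℕ}
    {g' : Fin k → Fin n → S}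
    (hg : LinearIndependent (ResidueField S) (residuePi S (Fin n) ∘ g')) :
    minrkdist R (Submodule.span S (Set.range g')) =
      minrkdist (ResidueField R)
        ((Submodule.span S (Set.range g')).map (residuePi S (Fin n))) := by
  rw [minrkdist_eq_sInf_vecrank, minrkdist_eq_sInf_vecrank]
  apply Nat.sInf_eq_of_forall_exists_le
  · rintro _ ⟨x, hx, hx0, rfl⟩
    obtain ⟨s, y, hs, hy, rfl, hy0⟩ := exists_eq_smul_of_mem_span hg hx hx0
    exact ⟨vecrank (ResidueField R) (residuePi S (Fin n) y),
      ⟨_, Submodule.mem_map_of_mem hy, hy0, rfl⟩, vecrank_residue_comp_le_vecrank_smul hs y⟩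
  · rintro _ ⟨_, ⟨y, hy, rfl⟩, hy0, rfl⟩
    obtain ⟨s, hs0, hs⟩ := exists_ne_zero_forall_mem_maximalIdeal_mul_eq_zero S
    refine ⟨vecrank R (s • y), ⟨s • y, Submodule.smul_mem _ s hy, fun h ↦ ?_, rfl⟩,
      vecrank_smul_le_vecrank_residue_comp hs y⟩
    exact hs0 (eq_zero_of_smul_eq_zero_of_residue_ne_zero h hy0)

end ResidueField

end IsLocalRing

theorem lift_of_code_is_free_same_rank_same_minDist_general
    (R S : Type*) [CommRing R] [IsLocalRing R]
    [CommRing S] [Finite S] [IsLocalRing S] [IsPrincipalIdealRing S]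
    [Algebra R S] [IsLocalHom (algebraMap R S)]
    (n k d : ℕ) (g : Fin k → (Fin n → ResidueField S))
    (C : Submodule (ResidueField S) (Fin n → ResidueField S))
    (hC : C = Submodule.span (ResidueField S) (Set.range g))
    (hk : subrank C = k) (hd : minrkdist (ResidueField R) C = d)
    (g' : Fin k → (Fin n → S)) (hg' : ∀ j i, residue S (g' j i) = g j i)
    (C' : Submodule S (Fin n → S)) (hC' : C' = Submodule.span S (Set.range g')) :
    Module.Free S ↥C' ∧ subrank C' = k ∧ minrkdist R C' = d := by
  subst hC hC' hd
  have hψ : residuePi S (Fin n) ∘ g' = g := funext fun j ↦ funext (hg' j)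
  have hmap : (Submodule.span S (Set.range g')).map (residuePi S (Fin n)) =
      Submodule.span (ResidueField S) (Set.range g) := by
    rw [Submodule.map_span, ← Set.range_comp, hψ]
  have hind : LinearIndependent (ResidueField S) (residuePi S (Fin n) ∘ g') :=
    hψ ▸ linearIndependent_of_subrank_span_eq g hk
  refine ⟨.of_basis (.span (linearIndependent_of_linearIndependent_residuePi hind)),
    le_antisymm (subrank_le_of_span_eq g' rfl) ?_,
    by rw [minrkdist_span_eq_minrkdist_map hind, hmap]⟩
  calc k = subrank (Submodule.span (ResidueField S) (Set.range g)) := hk.symm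
    _ ≤ subrank (Submodule.span S (Set.range g')) := hmap ▸ subrank_map_le _ g' rfl

/-- Let `R` be a finite commutative chain ring, `S` a Galois extension of
`R` of degree `m` with residue field `F_{q^m}` and natural projection `Ψ`.  Let `C` be an
`F_{q^m}`-linear rank metric code of length `n`, rank `k` and minimum rank distance `d`,
generated by `g₁, …, g_k`.  Choosing lifts `g'ⱼ ∈ S^n` with `Ψ(g'ⱼ) = gⱼ`, the `S`-linear
code `C'` generated by `g'₁, …, g'_k` is a free `S`-linear rank metric code of length `n`,
rank `k`, and minimum rank distance `d`. -/
theorem lift_of_code_is_free_same_rank_same_minDist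
    (R S : Type*) [CommRing R] [Finite R] [IsLocalRing R] [IsPrincipalIdealRing R]
    [CommRing S] [Finite S] [IsLocalRing S] [IsPrincipalIdealRing S]
    [Algebra R S] [IsLocalHom (algebraMap R S)] [Module.Free R S]
    (m : ℕ) (hm : Module.finrank R S = m)
    (hGal : maximalIdeal S = Ideal.map (algebraMap R S) (maximalIdeal R))
    (n k d : ℕ) (g : Fin k → (Fin n → ResidueField S))
    (C : Submodule (ResidueField S) (Fin n → ResidueField S))
    (hC : C = Submodule.span (ResidueField S) (Set.range g))
    (hk : subrank C = k) (hd : minrkdist (ResidueField R) C = d)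
    (g' : Fin k → (Fin n → S)) (hg' : ∀ j i, residue S (g' j i) = g j i)
    (C' : Submodule S (Fin n → S)) (hC' : C' = Submodule.span S (Set.range g')) :
    Module.Free S ↥C' ∧ subrank C' = k ∧ minrkdist R C' = d :=
  lift_of_code_is_free_same_rank_same_minDist_general R S n k d g C hC hk hd g' hg' C' hC'
end

section
/- Let R be a finite commutative chain ring with maximal ideal m = (π) of nilpotency index ν, and S a Galois extension of R of degree m with maximal ideal mS and residue field F_{q^m} = S/mS. The map φ : π^(ν−1) S → S/mS given by φ(π^(ν−1) u) = u + mS is a well-defined isomorphism of R/m-vector spaces, and its coefficient-by-coefficient extension from π^(ν−1) S^n to F_{q^m}^n is an isometry between the normed spaces (π^(ν−1) S^n, rk_R) and (F_{q^m}^n, rk_{F_q}), i.e., rk_R(x) = rk_{F_q}(φ(x)) for all x ∈ π^(ν−1) S^n. -/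
open IsLocalRing

/-! Because `π ^ ν = 0` and `𝔪_S = π S`, the annihilator in `S` of `c = π ^ (ν - 1)` is exactly
`𝔪_S` (`c` is nonzero in `S`, which is free over `R`), so `u ↦ c u` induces an `R`-linear
isomorphism `S / 𝔪_S ≃ c S`. Injective linear maps preserve the least number of generators of a
span, and since `R` acts on `S / 𝔪_S` through `R / 𝔪`, the `R`-span and the `R / 𝔪`-span of a
family in `S / 𝔪_S` coincide. -/

open Function Submodule

section Rank

variable {R M N : Type*} [Semiring R] [AddCommMonoid M] [Module R M] [AddCommMonoid N] [Module R N]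

lemma subrank_map_of_injective {f : M →ₗ[R] N} (hf : Injective f) (P : Submodule R M) :
    subrank (P.map f) = subrank P := by
  unfold subrank
  congr 1
  ext k
  constructor
  · rintro ⟨g, hg⟩
    have hg_mem (i : Fin k) : g i ∈ P.map f := hg ▸ subset_span (Set.mem_range_self i)
    choose p _ hfp using fun i => mem_map.mp (hg_mem i)
    refine ⟨p, map_injective_of_injective hf ?_⟩
    rw [map_span, ← Set.range_comp, show f ∘ p = g from funext hfp, hg]
  · rintro ⟨g, rfl⟩
    exact ⟨f ∘ g, by rw [Set.range_comp, map_span]⟩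

lemma vecrank_comp_of_injective {f : M →ₗ[R] N} (hf : Injective f) {n : ℕ} (u : Fin n → M) :
    vecrank R (f ∘ u) = vecrank R u := by
  rw [vecrank, Set.range_comp, ← map_span, subrank_map_of_injective hf, vecrank]

lemma vecrank_eq_of_surjective_algebraMap {R K V : Type*} [CommSemiring R] [Semiring K]
    [Algebra R K] [AddCommMonoid V] [Module R V] [Module K V] [IsScalarTower R K V]
    (h : Surjective (algebraMap R K)) {n : ℕ} (u : Fin n → V) :
    vecrank R u = vecrank K u := by
  simp only [vecrank, subrank, ← restrictScalars_span R K h, restrictScalars_inj]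

end Rank

section Residue

variable {R S : Type*} [CommRing R] [IsLocalRing R] [CommRing S] [IsLocalRing S] [Algebra R S]
  [IsLocalHom (algebraMap R S)]

-- Mathlib's instance concerns its own `Algebra (ResidueField R) (ResidueField S)`, which the
-- instance `residueFieldAlgebra` above overrides.
instance : IsScalarTower R (ResidueField R) (ResidueField S) :=
  .of_algebraMap_eq fun _ => rfl

lemma residue_smul (r : R) (v : ResidueField S) : residue R r • v = r • v := by
  rw [Algebra.smul_def, Algebra.smul_def]
  rfl

end Residue

section Socle

variable {R S : Type*} [CommRing R] [CommRing S] [Algebra R S]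

open Pointwise in
lemma mem_span_singleton_smul_top_iff {M : Type*} [AddCommGroup M] [Module R M] (c : R) (x : M) :
    x ∈ Ideal.span {c} • (⊤ : Submodule R M) ↔ ∃ u, c • u = x := by
  simp [ideal_span_singleton_smul, mem_smul_pointwise_iff_exists]

lemma smul_eq_zero_of_mem_map_span_singleton {π c : R} (hπc : π * c = 0) {u : S}
    (hu : u ∈ (Ideal.span {π}).map (algebraMap R S)) : c • u = 0 := by
  rw [Ideal.map_span, Set.image_singleton, Ideal.mem_span_singleton'] at hu
  obtain ⟨v, rfl⟩ := hu
  rw [Algebra.smul_def, mul_left_comm, ← map_mul, mul_comm c, hπc, map_zero, mul_zero]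

variable [IsLocalRing S]

lemma smul_eq_zero_iff_mem_maximalIdeal {c : R} (hc : algebraMap R S c ≠ 0)
    (hm : ∀ u ∈ maximalIdeal S, c • u = 0) (u : S) : c • u = 0 ↔ u ∈ maximalIdeal S := by
  refine ⟨fun h => ?_, hm u⟩
  by_contra hu
  rw [mem_maximalIdeal, mem_nonunits_iff, not_not] at hu
  rw [Algebra.smul_def, hu.mul_left_eq_zero] at h
  exact hc h

variable (c : R) (hc : ∀ u : S, c • u = 0 ↔ u ∈ maximalIdeal S)

noncomputable def residueFieldSmul : ResidueField S →ₗ[R] S :=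
  ((maximalIdeal S).liftQ (DistribSMul.toLinearMap S S c)
    fun u hu => (hc u).mpr hu).restrictScalars R

@[simp]
lemma residueFieldSmul_residue (u : S) : residueFieldSmul c hc (residue S u) = c • u :=
  rfl

lemma residueFieldSmul_injective : Injective (residueFieldSmul c hc) := by
  have hker := ker_liftQ_eq_bot (maximalIdeal S) (DistribSMul.toLinearMap S S c)
    (fun u hu => (hc u).mpr hu) fun u hu => (hc u).mp hu
  exact fun _ _ h => LinearMap.ker_eq_bot.mp hker h

lemma range_residueFieldSmul :
    LinearMap.range (residueFieldSmul c hc) = Ideal.span {c} • (⊤ : Submodule R S) := by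
  ext x
  rw [LinearMap.mem_range, mem_span_singleton_smul_top_iff, residue_surjective.exists]
  simp only [residueFieldSmul_residue]

noncomputable def residueFieldEquivSocle :
    ResidueField S ≃ₗ[R] ↥(Ideal.span {c} • (⊤ : Submodule R S)) :=
  (LinearEquiv.ofInjective _ (residueFieldSmul_injective c hc)).trans
    (LinearEquiv.ofEq _ _ (range_residueFieldSmul c hc))

lemma residueFieldEquivSocle_residue (u : S) :
    (residueFieldEquivSocle c hc (residue S u) : S) = c • u :=
  rfl

end Socle

theorem socle_residue_isometry_general
    (R S : Type*) [CommRing R] [IsLocalRing R]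
    [CommRing S] [IsLocalRing S]
    [Algebra R S] [IsLocalHom (algebraMap R S)] [Module.Free R S]
    (π : R) (hπ : Ideal.span {π} = maximalIdeal R)
    (ν : ℕ) (hν : 0 < ν) (hνnil : π ^ ν = 0) (hνmin : π ^ (ν - 1) ≠ 0)
    (hGal : maximalIdeal S = Ideal.map (algebraMap R S) (maximalIdeal R)) :
    ∃ φ : ↥(Ideal.span {π ^ (ν - 1)} • (⊤ : Submodule R S)) ≃+ ResidueField S,
      (∀ (x : ↥(Ideal.span {π ^ (ν - 1)} • (⊤ : Submodule R S))) (u : S),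
        (x : S) = π ^ (ν - 1) • u → φ x = residue S u) ∧
      (∀ (r : R) (x : ↥(Ideal.span {π ^ (ν - 1)} • (⊤ : Submodule R S))),
        φ (r • x) = residue R r • φ x) ∧
      (∀ (n : ℕ) (y : Fin n → S),
        vecrank R (π ^ (ν - 1) • y) =
          vecrank (ResidueField R) (fun i => residue S (y i))) := by
  have hπc : π * π ^ (ν - 1) = 0 := by rw [← pow_succ', Nat.sub_add_cancel hν, hνnil]
  have hc : ∀ u : S, π ^ (ν - 1) • u = 0 ↔ u ∈ maximalIdeal S :=
    smul_eq_zero_iff_mem_maximalIdeal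
      ((map_ne_zero_iff _ (FaithfulSMul.algebraMap_injective R S)).mpr hνmin)
      fun u hu => smul_eq_zero_of_mem_map_span_singleton hπc (by rwa [hπ, ← hGal])
  set e := residueFieldEquivSocle (π ^ (ν - 1)) hc
  refine ⟨e.symm.toAddEquiv, fun x u hxu => ?_, fun r x => ?_, fun n y => ?_⟩
  · change e.symm x = residue S u
    rw [LinearEquiv.symm_apply_eq]
    exact Subtype.ext (hxu.trans (residueFieldEquivSocle_residue _ hc u).symm)
  · change e.symm (r • x) = residue R r • e.symm x
    rw [map_smul, residue_smul]
  · have hy : π ^ (ν - 1) • y = (Submodule.subtype _ ∘ₗ e.toLinearMap) ∘ (residue S ∘ y) :=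
      funext fun i => (residueFieldEquivSocle_residue _ hc (y i)).symm
    rw [hy, vecrank_comp_of_injective (Subtype.val_injective.comp e.injective),
      vecrank_eq_of_surjective_algebraMap residue_surjective]
    rfl

/-- Let `R` be a finite commutative chain ring with maximal ideal
`m = (π)` of nilpotency index `ν`, and `S` a Galois extension of `R` of degree `m` with
maximal ideal `mS` and residue field `F_{q^m} = S/mS`.  The map `φ : π^(ν−1)S → S/mS`
given by `φ(π^(ν−1)u) = u + mS` is a well-defined isomorphism of `R/m`-vector spaces
(an additive isomorphism, semilinear with respect to `R → R/m`), and its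
coefficient-by-coefficient extension from `π^(ν−1)S^n` to `F_{q^m}^n` is an isometry
between `(π^(ν−1)S^n, rk_R)` and `(F_{q^m}^n, rk_{F_q})`:
`rk_R(π^(ν−1) y) = rk_{F_q}(φ(π^(ν−1) y)) = rk_{F_q}(Ψ(y))` for all `y ∈ S^n`. -/
theorem socle_residue_isometry
    (R S : Type*) [CommRing R] [Finite R] [IsLocalRing R] [IsPrincipalIdealRing R]
    [CommRing S] [Finite S] [IsLocalRing S] [IsPrincipalIdealRing S]
    [Algebra R S] [IsLocalHom (algebraMap R S)] [Module.Free R S]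
    (π : R) (hπ : Ideal.span {π} = maximalIdeal R)
    (ν : ℕ) (hν : 0 < ν) (hνnil : π ^ ν = 0) (hνmin : π ^ (ν - 1) ≠ 0)
    (m : ℕ) (hm : Module.finrank R S = m)
    (hGal : maximalIdeal S = Ideal.map (algebraMap R S) (maximalIdeal R)) :
    ∃ φ : ↥(Ideal.span {π ^ (ν - 1)} • (⊤ : Submodule R S)) ≃+ ResidueField S,
      (∀ (x : ↥(Ideal.span {π ^ (ν - 1)} • (⊤ : Submodule R S))) (u : S),
        (x : S) = π ^ (ν - 1) • u → φ x = residue S u) ∧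
      (∀ (r : R) (x : ↥(Ideal.span {π ^ (ν - 1)} • (⊤ : Submodule R S))),
        φ (r • x) = residue R r • φ x) ∧
      (∀ (n : ℕ) (y : Fin n → S),
        vecrank R (π ^ (ν - 1) • y) =
          vecrank (ResidueField R) (fun i => residue S (y i))) :=
  socle_residue_isometry_general R S π hπ ν hν hνnil hνmin hGal
end
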